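/- Let 0 < γ < 1 < β < α < 2^{1/γ−1} and let X be any quasi-Banach space. Then there exists a constant C(α,β,γ) > 2^{1−1/γ} such that every bounded linear operator T : X → ℓ_γ satisfies e₁(T) ≥ C(α,β,γ)‖T‖. In particular, the sharpness of the bound e₁(T) ≥ 2^{1−1/γ}‖T‖ cannot be witnessed by operators into ℓ_γ. -/

import Mathlib

open scoped BigOperators ENNReal

noncomputable section

/-- A γ-norm on a real vector space. -/
def IsGammaNorm {Y : Type*} [AddCommGroup Y] [Module ℝ Y] (γ : ℝ) (N : Y → ℝ) : Prop :=
  (∀ y, 0 ≤ N y) ∧ (∀ y, N y = 0 ↔ y = 0) ∧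
    (∀ (a : ℝ) (y : Y), N (a • y) = |a| * N y) ∧
    (∀ y z, N (y + z) ^ γ ≤ N y ^ γ + N z ^ γ)

/-- A quasi-norm with constant `C` on a real vector space. -/
def IsQuasiNorm {X : Type*} [AddCommGroup X] [Module ℝ X] (C : ℝ) (N : X → ℝ) : Prop :=
  1 ≤ C ∧ (∀ x, 0 ≤ N x) ∧ (∀ x, N x = 0 ↔ x = 0) ∧
    (∀ (a : ℝ) (x : X), N (a • x) = |a| * N x) ∧
    (∀ x y, N (x + y) ≤ C * (N x + N y))

/-- Completeness with respect to a (quasi/γ-)norm `N`. -/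
def NormComplete {Y : Type*} [AddCommGroup Y] (N : Y → ℝ) : Prop :=
  ∀ f : ℕ → Y,
    (∀ ε : ℝ, 0 < ε → ∃ n₀ : ℕ, ∀ m n, n₀ ≤ m → n₀ ≤ n → N (f m - f n) < ε) →
    ∃ y : Y, ∀ ε : ℝ, 0 < ε → ∃ n₀ : ℕ, ∀ n, n₀ ≤ n → N (f n - y) < ε

/-- Operator norm of a linear map w.r.t. norms `NX`, `NY`. -/
def opNorm {X Y : Type*} [AddCommGroup X] [Module ℝ X] [AddCommGroup Y] [Module ℝ Y]
    (NX : X → ℝ) (NY : Y → ℝ) (T : X →ₗ[ℝ] Y) : ℝ :=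
  sSup {r : ℝ | ∃ x : X, NX x ≤ 1 ∧ r = NY (T x)}

/-- The `k`-th (dyadic) outer entropy number of `T`. -/
def entropy {X Y : Type*} [AddCommGroup X] [Module ℝ X] [AddCommGroup Y] [Module ℝ Y]
    (NX : X → ℝ) (NY : Y → ℝ) (T : X →ₗ[ℝ] Y) (k : ℕ) : ℝ :=
  sInf {ε : ℝ | 0 < ε ∧ ∃ c : Fin (2 ^ (k - 1)) → Y,
    ∀ x : X, NX x ≤ 1 → ∃ i, NY (T x - c i) ≤ ε}

/-- The `k`-th (dyadic) inner entropy number of `T`. -/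
def innerEntropy {X Y : Type*} [AddCommGroup X] [Module ℝ X] [AddCommGroup Y] [Module ℝ Y]
    (NX : X → ℝ) (NY : Y → ℝ) (T : X →ₗ[ℝ] Y) (k : ℕ) : ℝ :=
  sSup {ε : ℝ | 0 < ε ∧ ∃ p : Fin (2 ^ (k - 1) + 1) → X,
    (∀ i, NX (p i) ≤ 1) ∧ ∀ i j, i ≠ j → 2 * ε ≤ NY (T (p i) - T (p j))}

/-- Membership in the sequence space `ℓ_γ`. -/
def Memlg (γ : ℝ) (x : ℕ → ℝ) : Prop := Summable fun i => |x i| ^ γ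

/-- The `ℓ_γ` γ-norm. -/
def lgNorm (γ : ℝ) (x : ℕ → ℝ) : ℝ := (∑' i, |x i| ^ γ) ^ (1/γ)

/-!
Let `t = 2^(γ-1)`. If `T(B_X)` lies in the ball of radius `ε` around `y`, then so do `T x`,
`T (-x)` and `T 0`, so `u = T x` satisfies `‖u - y‖, ‖u + y‖, ‖y‖ ≤ ε` in `ℓ_γ`. Writing
`2u = (u - y) + (u + y)` only gives `2^γ ‖u‖^γ ≤ 2 ε^γ`, i.e. the constant `2^(1-1/γ)`. The scalar
two-point inequality `2^γ |a|^γ ≤ t (|a - b|^γ + |a + b|^γ) + (1 - t²) |b|^γ` also uses `‖y‖ ≤ ε`: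
summed over the coordinates it gives `2^γ ‖u‖^γ ≤ (2^γ + 1 - t²) ε^γ`, and
`2^γ + 1 - t² = 2 - (1 - t)² < 2` as soon as `γ < 1`.
-/

namespace Real

variable {γ : ℝ}

lemma two_rpow_eq_two_mul (γ : ℝ) : (2 : ℝ) ^ γ = 2 * 2 ^ (γ - 1) := by
  rw [rpow_sub_one two_ne_zero]; ring

lemma two_rpow_sub_one_le_one (hγ1 : γ ≤ 1) : (2 : ℝ) ^ (γ - 1) ≤ 1 :=
  rpow_le_one_of_one_le_of_nonpos one_le_two (by linarith)

lemma one_add_two_rpow_sub_one_mul_le_rpow (hγ0 : 0 ≤ γ) (hγ1 : γ ≤ 1) {c : ℝ} (hc0 : 0 ≤ c)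
    (hc1 : c ≤ 1) : 1 + (2 ^ γ - 1) * c ≤ (1 + c) ^ γ := by
  have h := (concaveOn_rpow hγ0 hγ1).2 (Set.mem_Ici.2 zero_le_one) (Set.mem_Ici.2 zero_le_two)
    (sub_nonneg.2 hc1) hc0 (by ring)
  simp only [smul_eq_mul, one_rpow] at h
  rw [show (1 - c) * 1 + c * 2 = 1 + c by ring] at h
  linarith

lemma two_point_rpow_unit (hγ0 : 0 ≤ γ) (hγ1 : γ ≤ 1) {c : ℝ} (hc0 : 0 ≤ c) (hc1 : c ≤ 1) :
    (2 : ℝ) ^ γ ≤ 2 ^ (γ - 1) * ((1 - c) ^ γ + (1 + c) ^ γ) + (1 - (2 ^ (γ - 1)) ^ 2) * c ^ γ := by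
  have h₁ : 1 - c ≤ (1 - c) ^ γ := self_le_rpow_of_le_one (by linarith) (by linarith) hγ1
  have h₂ := one_add_two_rpow_sub_one_mul_le_rpow hγ0 hγ1 hc0 hc1
  have h₃ : c ≤ c ^ γ := self_le_rpow_of_le_one hc0 hc1 hγ1
  have ht1 := two_rpow_sub_one_le_one hγ1
  set t : ℝ := 2 ^ (γ - 1)
  have ht0 : 0 ≤ t := by positivity
  have ht2 : 0 ≤ 1 - t ^ 2 := by nlinarith
  calc (2 : ℝ) ^ γ ≤ 2 * t + (1 - t) ^ 2 * c := by rw [two_rpow_eq_two_mul]; nlinarith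
    _ = t * ((1 - c) + (1 + (2 ^ γ - 1) * c)) + (1 - t ^ 2) * c := by
      rw [two_rpow_eq_two_mul]; ring
    _ ≤ t * ((1 - c) ^ γ + (1 + c) ^ γ) + (1 - t ^ 2) * c ^ γ := by gcongr

lemma two_point_rpow_of_nonneg (hγ0 : 0 ≤ γ) (hγ1 : γ ≤ 1) {p q : ℝ} (hp : 0 ≤ p) (hq : 0 ≤ q) :
    2 ^ γ * p ^ γ ≤
      2 ^ (γ - 1) * (|p - q| ^ γ + (p + q) ^ γ) + (1 - (2 ^ (γ - 1)) ^ 2) * q ^ γ := by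
  rcases le_total q p with hqp | hpq
  · obtain ⟨c, hc0, hc1, rfl⟩ : ∃ c, 0 ≤ c ∧ c ≤ 1 ∧ q = c * p :=
      ⟨q / p, by positivity, div_le_one_of_le₀ hqp hp,
        (div_mul_cancel_of_imp fun h => le_antisymm (h ▸ hqp) hq).symm⟩
    rw [show p - c * p = (1 - c) * p by ring, show p + c * p = (1 + c) * p by ring,
      abs_of_nonneg (by nlinarith), mul_rpow (by linarith) hp, mul_rpow (by linarith) hp,
      mul_rpow hc0 hp]
    have h := mul_le_mul_of_nonneg_right (two_point_rpow_unit hγ0 hγ1 hc0 hc1)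
      (rpow_nonneg hp γ)
    linarith
  · have h₁ : 2 ^ γ * p ^ γ ≤ (p + q) ^ γ := by
      rw [← mul_rpow zero_le_two hp]; gcongr; linarith
    have h₂ : p ^ γ ≤ q ^ γ := by gcongr
    rw [two_rpow_eq_two_mul] at h₁ ⊢
    have ht1 := two_rpow_sub_one_le_one hγ1
    set t : ℝ := 2 ^ (γ - 1)
    calc 2 * t * p ^ γ = t * (2 * t * p ^ γ) + (1 - t) * (2 * t) * p ^ γ := by ring
      _ ≤ t * (p + q) ^ γ + (1 - t) * (1 + t) * q ^ γ := by
        gcongr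
        linarith
      _ ≤ t * (|p - q| ^ γ + (p + q) ^ γ) + (1 - t ^ 2) * q ^ γ := by
        nlinarith [rpow_nonneg (abs_nonneg (p - q)) γ, rpow_nonneg zero_le_two (γ - 1)]

lemma two_point_rpow (hγ0 : 0 ≤ γ) (hγ1 : γ ≤ 1) (a b : ℝ) :
    2 ^ γ * |a| ^ γ ≤
      2 ^ (γ - 1) * (|a - b| ^ γ + |a + b| ^ γ) + (1 - (2 ^ (γ - 1)) ^ 2) * |b| ^ γ := by
  wlog ha : 0 ≤ a generalizing a
  · have h := this (-a) (by linarith)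
    rwa [show -a - b = -(a + b) by ring, show -a + b = -(a - b) by ring, abs_neg, abs_neg,
      abs_neg, add_comm (|a + b| ^ γ)] at h
  wlog hb : 0 ≤ b generalizing b
  · have h := this (-b) (by linarith)
    rwa [sub_neg_eq_add, ← sub_eq_add_neg, abs_neg, add_comm (|a + b| ^ γ)] at h
  rw [abs_of_nonneg ha, abs_of_nonneg hb, abs_of_nonneg (add_nonneg ha hb)]
  exact two_point_rpow_of_nonneg hγ0 hγ1 ha hb

lemma mul_sSup_le_sInf {S E : Set ℝ} {c : ℝ} (hc : 0 ≤ c) (hE : E.Nonempty)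
    (hE₀ : ∀ ε ∈ E, 0 ≤ ε) (h : ∀ r ∈ S, ∀ ε ∈ E, c * r ≤ ε) : c * sSup S ≤ sInf E := by
  rw [← smul_eq_mul, ← sSup_smul_of_nonneg hc]
  refine Real.sSup_le ?_ (Real.sInf_nonneg hE₀)
  rintro _ ⟨r, hr, rfl⟩
  exact le_csInf hE (h r hr)

end Real

section LgSpace

variable {γ : ℝ}

lemma memlg_iff_memℓp (hγ : 0 < γ) {x : ℕ → ℝ} : Memlg γ x ↔ Memℓp x (ENNReal.ofReal γ) := by
  rw [memℓp_gen_iff (by rwa [ENNReal.toReal_ofReal hγ.le]), ENNReal.toReal_ofReal hγ.le]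
  simp only [Real.norm_eq_abs, Memlg]

lemma Memlg.neg {x : ℕ → ℝ} (hx : Memlg γ x) : Memlg γ (-x) := by
  simpa only [Memlg, Pi.neg_apply, abs_neg] using hx

lemma Memlg.add (hγ : 0 < γ) {x y : ℕ → ℝ} (hx : Memlg γ x) (hy : Memlg γ y) :
    Memlg γ (x + y) :=
  (memlg_iff_memℓp hγ).2 (((memlg_iff_memℓp hγ).1 hx).add ((memlg_iff_memℓp hγ).1 hy))

lemma Memlg.sub (hγ : 0 < γ) {x y : ℕ → ℝ} (hx : Memlg γ x) (hy : Memlg γ y) :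
    Memlg γ (x - y) := by
  simpa only [sub_eq_add_neg] using hx.add hγ hy.neg

lemma lgNorm_nonneg (x : ℕ → ℝ) : 0 ≤ lgNorm γ x := by
  unfold lgNorm; positivity

lemma lgNorm_neg (x : ℕ → ℝ) : lgNorm γ (-x) = lgNorm γ x := by
  simp only [lgNorm, Pi.neg_apply, abs_neg]

lemma lgNorm_rpow (hγ : γ ≠ 0) (x : ℕ → ℝ) : lgNorm γ x ^ γ = ∑' i, |x i| ^ γ := by
  rw [lgNorm, ← Real.rpow_mul (by positivity), one_div_mul_cancel hγ, Real.rpow_one]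

lemma tsum_rpow_le_of_lgNorm_le (hγ : 0 < γ) {x : ℕ → ℝ} {ε : ℝ} (h : lgNorm γ x ≤ ε) :
    ∑' i, |x i| ^ γ ≤ ε ^ γ := by
  rw [← lgNorm_rpow hγ.ne']
  exact Real.rpow_le_rpow (lgNorm_nonneg x) h hγ.le

def lgConst (γ : ℝ) : ℝ := (2 ^ γ / (2 ^ γ + 1 - (2 ^ (γ - 1)) ^ 2)) ^ γ⁻¹

lemma lgConst_denom_pos (hγ1 : γ ≤ 1) : 0 < (2 : ℝ) ^ γ + 1 - (2 ^ (γ - 1)) ^ 2 := by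
  nlinarith [Real.two_rpow_sub_one_le_one hγ1, Real.rpow_pos_of_pos two_pos γ,
    Real.rpow_pos_of_pos two_pos (γ - 1)]

lemma lgConst_pos (hγ1 : γ ≤ 1) : 0 < lgConst γ := by
  have := lgConst_denom_pos hγ1
  unfold lgConst; positivity

lemma lgConst_rpow (hγ0 : γ ≠ 0) (hγ1 : γ ≤ 1) :
    lgConst γ ^ γ = 2 ^ γ / (2 ^ γ + 1 - (2 ^ (γ - 1)) ^ 2) := by
  have := lgConst_denom_pos hγ1
  exact Real.rpow_inv_rpow (by positivity) hγ0

lemma two_rpow_one_sub_inv_lt_lgConst (hγ0 : 0 < γ) (hγ1 : γ < 1) :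
    (2 : ℝ) ^ (1 - 1 / γ) < lgConst γ := by
  have hw := lgConst_denom_pos hγ1.le
  set t : ℝ := 2 ^ (γ - 1)
  have ht0 : 0 < t := by positivity
  have ht1 : t < 1 := Real.rpow_lt_one_of_one_lt_of_neg one_lt_two (by linarith)
  have ht : (2 : ℝ) ^ (1 - 1 / γ) = t ^ γ⁻¹ := by
    rw [← Real.rpow_mul zero_le_two]; congr 1; field_simp
  rw [ht, lgConst]
  refine Real.rpow_lt_rpow ht0.le ?_ (inv_pos.2 hγ0)
  rw [lt_div_iff₀ hw, Real.two_rpow_eq_two_mul]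
  nlinarith [mul_pos ht0 (mul_pos (sub_pos.2 ht1) (sub_pos.2 ht1))]

lemma lgConst_mul_lgNorm_le (hγ0 : 0 < γ) (hγ1 : γ ≤ 1) {u y : ℕ → ℝ} (hu : Memlg γ u)
    (hy : Memlg γ y) {ε : ℝ} (h₁ : lgNorm γ (u - y) ≤ ε) (h₂ : lgNorm γ (u + y) ≤ ε)
    (h₃ : lgNorm γ y ≤ ε) : lgConst γ * lgNorm γ u ≤ ε := by
  have hε : 0 ≤ ε := (lgNorm_nonneg y).trans h₃
  have ht1 := Real.two_rpow_sub_one_le_one hγ1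
  set t : ℝ := 2 ^ (γ - 1)
  have hsum : 2 ^ γ * lgNorm γ u ^ γ ≤ (2 ^ γ + 1 - t ^ 2) * ε ^ γ := by
    have h := hasSum_le (fun i => Real.two_point_rpow hγ0.le hγ1 (u i) (y i))
      (hu.hasSum.mul_left _)
      ((((hu.sub hγ0 hy).hasSum.add (hu.add hγ0 hy).hasSum).mul_left t).add
        (hy.hasSum.mul_left (1 - t ^ 2)))
    have ht2 : 0 ≤ 1 - t ^ 2 := by nlinarith [Real.rpow_pos_of_pos two_pos (γ - 1)]
    calc 2 ^ γ * lgNorm γ u ^ γ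
        ≤ t * (∑' i, |(u - y) i| ^ γ + ∑' i, |(u + y) i| ^ γ)
            + (1 - t ^ 2) * ∑' i, |y i| ^ γ := by
          rwa [lgNorm_rpow hγ0.ne']
      _ ≤ t * (ε ^ γ + ε ^ γ) + (1 - t ^ 2) * ε ^ γ := by
        gcongr <;> exact tsum_rpow_le_of_lgNorm_le hγ0 ‹_›
      _ = (2 ^ γ + 1 - t ^ 2) * ε ^ γ := by rw [Real.two_rpow_eq_two_mul]; ring
  have hw := lgConst_denom_pos hγ1
  rw [← Real.rpow_le_rpow_iff (mul_nonneg (lgConst_pos hγ1).le (lgNorm_nonneg u)) hε hγ0,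
    Real.mul_rpow (lgConst_pos hγ1).le (lgNorm_nonneg u), lgConst_rpow hγ0.ne' hγ1,
    div_mul_eq_mul_div, div_le_iff₀ hw]
  linarith

end LgSpace

theorem no_sharpness_in_lg_general (γ : ℝ) (hγ0 : 0 < γ) (hγ1 : γ < 1)
    (X : Type*) [AddCommGroup X] [Module ℝ X] (C : ℝ) (NX : X → ℝ)
    (hNX : IsQuasiNorm C NX) :
    ∃ Cc : ℝ, (2:ℝ) ^ (1 - 1/γ) < Cc ∧
      ∀ T : X →ₗ[ℝ] (ℕ → ℝ), (∀ x, Memlg γ (T x)) →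
        (∃ M : ℝ, ∀ x, lgNorm γ (T x) ≤ M * NX x) →
        Cc * sSup {r : ℝ | ∃ x : X, NX x ≤ 1 ∧ r = lgNorm γ (T x)} ≤
          sInf {ε : ℝ | 0 < ε ∧ ∃ y : ℕ → ℝ, Memlg γ y ∧
            ∀ x : X, NX x ≤ 1 → lgNorm γ (T x - y) ≤ ε} := by
  obtain ⟨-, hNX_nonneg, -, hNX_smul, -⟩ := hNX
  refine ⟨lgConst γ, two_rpow_one_sub_inv_lt_lgConst hγ0 hγ1, fun T hT ⟨M, hM⟩ => ?_⟩
  refine Real.mul_sSup_le_sInf (lgConst_pos hγ1.le).le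
    ⟨|M| + 1, by positivity, 0, ?_, fun x hx => ?_⟩ (fun ε hε => hε.1.le) ?_
  · simp [Memlg, Real.zero_rpow hγ0.ne']
  · calc lgNorm γ (T x - 0) ≤ M * NX x := by rw [sub_zero]; exact hM x
      _ ≤ |M| * 1 := mul_le_mul (le_abs_self M) hx (hNX_nonneg x) (abs_nonneg M)
      _ ≤ |M| + 1 := by linarith
  · rintro _ ⟨x, hx, rfl⟩ ε ⟨-, y, hy, hcover⟩
    have h_neg : NX (-x) ≤ 1 := by rw [← neg_one_smul ℝ x, hNX_smul]; simpa using hx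
    have h_zero : NX 0 ≤ 1 := by rw [← zero_smul ℝ x, hNX_smul]; simp
    refine lgConst_mul_lgNorm_le hγ0 hγ1.le (hT x) hy (hcover x hx) ?_ ?_
    · rw [← lgNorm_neg, neg_add', ← map_neg]
      exact hcover (-x) h_neg
    · simpa [lgNorm_neg] using hcover 0 h_zero

theorem no_sharpness_in_lg (γ β α : ℝ) (hγ0 : 0 < γ) (hγ1 : γ < 1)
    (hβ : 1 < β) (hβα : β < α) (hα : α < (2:ℝ) ^ (1/γ - 1))
    (X : Type*) [AddCommGroup X] [Module ℝ X] (C : ℝ) (NX : X → ℝ)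
    (hNX : IsQuasiNorm C NX) (hXc : NormComplete NX) :
    ∃ Cc : ℝ, (2:ℝ) ^ (1 - 1/γ) < Cc ∧
      ∀ T : X →ₗ[ℝ] (ℕ → ℝ), (∀ x, Memlg γ (T x)) →
        (∃ M : ℝ, ∀ x, lgNorm γ (T x) ≤ M * NX x) →
        Cc * sSup {r : ℝ | ∃ x : X, NX x ≤ 1 ∧ r = lgNorm γ (T x)} ≤
          sInf {ε : ℝ | 0 < ε ∧ ∃ y : ℕ → ℝ, Memlg γ y ∧
            ∀ x : X, NX x ≤ 1 → lgNorm γ (T x - y) ≤ ε} :=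
  no_sharpness_in_lg_general γ hγ0 hγ1 X C NX hNX
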